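/- Let K = S + ℝ₊d be a first-order cone in ℝⁿ (S a subspace, d ∈ ℝⁿ), and let A₁, …, Aₘ be real symmetric n×n matrices such that Aᵢ = αᵢA₁ + βᵢA₂ for some reals αᵢ, βᵢ, for i = 3, …, m. Then max_{i=1,…,m} xᵀAᵢx ≥ 0 for all x ∈ K if and only if there exists t in the simplex Δₘ such that Σᵢ tᵢ xᵀAᵢx ≥ 0 for all x ∈ K. -/

import Mathlib

/-!
The joint image `{(xᵀBx, xᵀCx) : x ∈ V}` of two quadratic forms on a subspace `V` is convex
(Dines): rotating a pair `x, y` inside its span keeps the sum of the two images fixed, so by the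
intermediate value theorem one of the rotated vectors is mapped to a positive multiple of that
sum. Quadratic forms are even, so the first-order cone `S + ℝ₊d` has the same image as the
subspace `S + ℝd`, and since every `Aᵢ` is a combination of `A₁` and `A₂`, the image of `K` under
`x ↦ (xᵀAᵢx)ᵢ` is a linear image of a convex set. A convex set in `ℝᵐ` missing the open negative
orthant is separated from it by a hyperplane with nonnegative normal; normalised, that normal is
the required `t ∈ Δₘ`.
-/

open Matrix

def firstOrderCone {E : Type*} [AddCommGroup E] [Module ℝ E] (S : Submodule ℝ E) (d : E) :
    Set E :=
  {x | ∃ u ∈ S, ∃ c : ℝ, 0 ≤ c ∧ x = u + c • d}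

theorem image_firstOrderCone_eq_image_sup_span {E F : Type*} [AddCommGroup E] [Module ℝ E]
    {f : E → F} (hf : ∀ x, f (-x) = f x) (S : Submodule ℝ E) (d : E) :
    f '' firstOrderCone S d = f '' ↑(S ⊔ ℝ ∙ d) := by
  refine (Set.image_mono ?_).antisymm ?_
  · rintro _ ⟨u, hu, c, -, rfl⟩
    exact Submodule.mem_sup.2
      ⟨u, hu, c • d, Submodule.smul_mem _ c (Submodule.mem_span_singleton_self d), rfl⟩
  · rintro _ ⟨x, hx, rfl⟩
    obtain ⟨u, hu, w, hw, rfl⟩ := Submodule.mem_sup.1 hx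
    obtain ⟨c, rfl⟩ := Submodule.mem_span_singleton.1 hw
    rcases le_total 0 c with hc | hc
    · exact ⟨u + c • d, ⟨u, hu, c, hc, rfl⟩, rfl⟩
    · refine ⟨-(u + c • d), ⟨-u, S.neg_mem hu, -c, neg_nonneg.2 hc, by module⟩, hf _⟩

theorem Prod.exists_pos_smul_eq_of_add_eq {p q s : ℝ × ℝ} (hs : s ≠ 0) (hpq : p + q = s)
    (hdet : s.1 * p.2 = s.2 * p.1) : ∃ r : ℝ, 0 < r ∧ (r • s = p ∨ r • s = q) := by
  have hN : 0 < s.1 ^ 2 + s.2 ^ 2 := by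
    have : s.1 ≠ 0 ∨ s.2 ≠ 0 := by contrapose! hs; exact Prod.ext hs.1 hs.2
    rcases this with h | h <;> positivity
  set c := (s.1 * p.1 + s.2 * p.2) / (s.1 ^ 2 + s.2 ^ 2)
  have hp : c • s = p := by
    ext <;> simp only [Prod.smul_fst, Prod.smul_snd, smul_eq_mul] <;>
      rw [div_mul_eq_mul_div, div_eq_iff hN.ne']
    · linear_combination s.2 * hdet
    · linear_combination -s.1 * hdet
  rcases lt_or_ge 0 c with hc | hc
  · exact ⟨c, hc, Or.inl hp⟩
  · refine ⟨1 - c, by linarith, Or.inr ?_⟩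
    rw [sub_smul, one_smul, hp, ← hpq, add_sub_cancel_left]

namespace QuadraticMap

variable {E : Type*} [AddCommGroup E] [Module ℝ E]

theorem map_smul_add_smul (Q : QuadraticMap ℝ E ℝ) (a b : ℝ) (x y : E) :
    Q (a • x + b • y) = a ^ 2 * Q x + b ^ 2 * Q y + a * b * polar Q x y := by
  have h : polar Q (a • x) (b • y) = a * b * polar Q x y := by
    rw [polar_smul_left, polar_smul_right, smul_eq_mul, smul_eq_mul, mul_assoc]
  rw [polar, QuadraticMap.map_smul, QuadraticMap.map_smul, smul_eq_mul, smul_eq_mul] at h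
  linear_combination h

theorem map_rotation_add (Q : QuadraticMap ℝ E ℝ) {a b : ℝ} (hab : a ^ 2 + b ^ 2 = 1)
    (x y : E) : Q (a • x + b • y) + Q ((-b) • x + a • y) = Q x + Q y := by
  rw [map_smul_add_smul, map_smul_add_smul]
  linear_combination (Q x + Q y) * hab

theorem prod_map_smul (Q₁ Q₂ : QuadraticMap ℝ E ℝ) (a : ℝ) (x : E) :
    (Q₁ (a • x), Q₂ (a • x)) = (a * a) • (Q₁ x, Q₂ x) := by
  simp only [QuadraticMap.map_smul, Prod.smul_mk]

open Real in
theorem exists_mem_prod_eq_add (Q₁ Q₂ : QuadraticMap ℝ E ℝ) (V : Submodule ℝ E) {x y : E}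
    (hx : x ∈ V) (hy : y ∈ V) :
    ∃ z ∈ V, (Q₁ z, Q₂ z) = (Q₁ x, Q₂ x) + (Q₁ y, Q₂ y) := by
  set s := (Q₁ x, Q₂ x) + (Q₁ y, Q₂ y)
  rcases eq_or_ne s 0 with hs | hs
  · exact ⟨0, V.zero_mem, by simp [hs]⟩
  set u : ℝ → E := fun θ => cos θ • x + sin θ • y
  set v : ℝ → E := fun θ => (-sin θ) • x + cos θ • y
  have huv : ∀ θ, (Q₁ (u θ), Q₂ (u θ)) + (Q₁ (v θ), Q₂ (v θ)) = s := fun θ => by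
    simp only [Prod.mk_add_mk, u, v, map_rotation_add _ (cos_sq_add_sin_sq θ), s]
  -- `g θ = 0` says that the image of `u θ` is parallel to `s`.
  set g : ℝ → ℝ := fun θ => s.1 * Q₂ (u θ) - s.2 * Q₁ (u θ)
  have hg : Continuous g := by
    simp only [g, u, map_smul_add_smul]
    fun_prop
  have hg_pi_div_two : g (π / 2) = -g 0 := by
    simp only [g, u, s, Prod.mk_add_mk, cos_pi_div_two, sin_pi_div_two, cos_zero, sin_zero,
      zero_smul, one_smul, zero_add, add_zero, neg_sub]
    ring
  obtain ⟨θ, hθ⟩ : ∃ θ, g θ = 0 := by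
    rcases le_total (g 0) 0 with h | h
    · exact mem_range_of_exists_le_of_exists_ge hg ⟨0, h⟩ ⟨π / 2, by linarith⟩
    · exact mem_range_of_exists_le_of_exists_ge hg ⟨π / 2, by linarith⟩ ⟨0, h⟩
  have hrescale : ∀ w ∈ V, ∀ r : ℝ, 0 < r → r • s = (Q₁ w, Q₂ w) →
      ∃ z ∈ V, (Q₁ z, Q₂ z) = s := fun w hw r hr hrw =>
    ⟨(√r)⁻¹ • w, V.smul_mem _ hw, by
      rw [prod_map_smul, ← hrw, smul_smul, ← mul_inv, Real.mul_self_sqrt hr.le,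
        inv_mul_cancel₀ hr.ne', one_smul]⟩
  obtain ⟨r, hr, hu | hv⟩ := Prod.exists_pos_smul_eq_of_add_eq hs (huv θ) (by linarith [hθ])
  · exact hrescale _ (V.add_mem (V.smul_mem _ hx) (V.smul_mem _ hy)) r hr hu
  · exact hrescale _ (V.add_mem (V.smul_mem _ hx) (V.smul_mem _ hy)) r hr hv

theorem convex_image_prod (Q₁ Q₂ : QuadraticMap ℝ E ℝ) (V : Submodule ℝ E) :
    Convex ℝ ((fun x => (Q₁ x, Q₂ x)) '' V) := by
  rintro _ ⟨x, hx, rfl⟩ _ ⟨y, hy, rfl⟩ a b ha hb -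
  obtain ⟨z, hz, hz_eq⟩ :=
    exists_mem_prod_eq_add Q₁ Q₂ V (V.smul_mem √a hx) (V.smul_mem √b hy)
  refine ⟨z, hz, ?_⟩
  dsimp only
  rw [hz_eq, prod_map_smul, prod_map_smul, Real.mul_self_sqrt ha, Real.mul_self_sqrt hb]

end QuadraticMap

theorem convex_image_firstOrderCone_of_mem_pencil {n ι : Type*} [Fintype n]
    (S : Submodule ℝ (n → ℝ)) (d : n → ℝ) (A : ι → Matrix n n ℝ) (B₁ B₂ : Matrix n n ℝ)
    (hA : ∀ i, ∃ α β : ℝ, A i = α • B₁ + β • B₂) :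
    Convex ℝ ((fun x i => x ⬝ᵥ A i *ᵥ x) '' firstOrderCone S d) := by
  classical
  choose α β hαβ using hA
  let L : ℝ × ℝ →ₗ[ℝ] ι → ℝ :=
    LinearMap.pi fun i => α i • LinearMap.fst ℝ ℝ ℝ + β i • LinearMap.snd ℝ ℝ ℝ
  have hq : (fun x i => x ⬝ᵥ A i *ᵥ x) =
      L ∘ fun x => (B₁.toQuadraticForm' x, B₂.toQuadraticForm' x) := by
    funext x i
    simp [L, hαβ i, Matrix.toQuadraticForm', toLinearMap₂'_apply', add_mulVec, smul_mulVec,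
      dotProduct_mulVec]
  rw [image_firstOrderCone_eq_image_sup_span (fun x => by simp [mulVec_neg]), hq, Set.image_comp]
  exact (QuadraticMap.convex_image_prod _ _ _).linear_image L

open Set in
theorem exists_mem_stdSimplex_forall_sum_mul_nonneg {ι : Type*} [Fintype ι]
    {C : Set (ι → ℝ)} (hC : Convex ℝ C) (hne : C.Nonempty) (h : ∀ y ∈ C, ∃ i, 0 ≤ y i) :
    ∃ t ∈ stdSimplex ℝ ι, ∀ y ∈ C, 0 ≤ ∑ i, t i * y i := by
  classical
  set N : Set (ι → ℝ) := univ.pi fun _ => Iio 0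
  have hdisj : Disjoint N C := disjoint_left.2 fun y hyN hyC => by
    obtain ⟨i, hi⟩ := h y hyC
    exact (hyN i (mem_univ i)).not_ge hi
  obtain ⟨f, u, hfN, hfC⟩ := geometric_hahn_banach_open (convex_pi fun _ _ => convex_Iio 0)
    (isOpen_set_pi finite_univ fun _ _ => isOpen_Iio) hC hdisj
  have hf_le : ∀ y, (∀ i, y i ≤ 0) → f y ≤ u := by
    have : closure N ⊆ {y | f y ≤ u} :=
      closure_minimal (fun y hy => (hfN y hy).le) (isClosed_le f.continuous continuous_const)
    intro y hy
    apply this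
    simpa [N, closure_pi_set, closure_Iio, Pi.le_def] using hy
  set c : ι → ℝ := fun i => f (Pi.single i 1)
  have hf : ∀ y, f y = ∑ i, c i * y i := fun y => by
    conv_lhs => rw [pi_eq_sum_univ' y]
    simp [c, mul_comm]
  have hu : 0 ≤ u := by simpa using hf_le 0 fun _ => le_rfl
  have hc : ∀ i, 0 ≤ c i := fun i => by
    by_contra! hci
    have h₁ := hf_le (((u + 1) / c i) • Pi.single i 1) fun j =>
      mul_nonpos_of_nonpos_of_nonneg (div_nonpos_of_nonneg_of_nonpos (by linarith) hci.le)
        (by rw [Pi.single_apply]; split_ifs <;> norm_num)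
    rw [map_smul, smul_eq_mul, div_mul_cancel₀ _ hci.ne] at h₁
    linarith
  have hc_sum : 0 < ∑ i, c i := by
    obtain ⟨y₀, hy₀⟩ := hne
    refine (Finset.sum_nonneg fun i _ => hc i).lt_of_ne fun hsum => ?_
    have hc0 : ∀ i, c i = 0 := fun i =>
      (Finset.sum_eq_zero_iff_of_nonneg fun i _ => hc i).1 hsum.symm i (Finset.mem_univ i)
    have h₁ := hfN (fun _ => -1) fun i _ => by norm_num
    have h₂ := hfC y₀ hy₀
    simp only [hf, hc0, zero_mul, Finset.sum_const_zero] at h₁ h₂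
    linarith
  refine ⟨fun i => c i / ∑ j, c j,
    ⟨fun i => div_nonneg (hc i) hc_sum.le, by rw [← Finset.sum_div, div_self hc_sum.ne']⟩,
    fun y hy => ?_⟩
  simp only [div_mul_eq_mul_div, ← Finset.sum_div]
  exact div_nonneg ((hf y).symm ▸ hu.trans (hfC y hy)) hc_sum.le

theorem exists_nonneg_of_sum_mul_nonneg {ι : Type*} [Fintype ι] {t y : ι → ℝ}
    (ht : t ∈ stdSimplex ℝ ι) (h : 0 ≤ ∑ i, t i * y i) : ∃ i, 0 ≤ y i := by
  by_contra! hy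
  obtain ⟨i, hi⟩ : ∃ i, 0 < t i := by
    by_contra! ht0
    have := ht.2
    simp [fun i => le_antisymm (ht0 i) (ht.1 i)] at this
  have := Finset.sum_lt_sum (fun j _ => mul_nonpos_of_nonneg_of_nonpos (ht.1 j) (hy j).le)
    ⟨i, Finset.mem_univ i, mul_neg_of_pos_of_neg hi (hy i)⟩
  simp only [Finset.sum_const_zero] at this
  linarith

theorem haeser_extended_yuan (n m : ℕ) (hm : 2 ≤ m)
    (S : Submodule ℝ (Fin n → ℝ)) (d : Fin n → ℝ)
    (K : Set (Fin n → ℝ))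
    (hK : K = {x | ∃ u ∈ S, ∃ c : ℝ, 0 ≤ c ∧ x = u + c • d})
    (A : Fin m → Matrix (Fin n) (Fin n) ℝ)
    (hgen : ∀ i, ∃ α β : ℝ,
      A i = α • A ⟨0, by omega⟩ + β • A ⟨1, by omega⟩) :
    (∀ x ∈ K, ∃ i, 0 ≤ x ⬝ᵥ (A i) *ᵥ x) ↔
    (∃ t : Fin m → ℝ, (∀ i, 0 ≤ t i) ∧ (∑ i, t i = 1) ∧
      ∀ x ∈ K, 0 ≤ ∑ i, t i * (x ⬝ᵥ (A i) *ᵥ x)) := by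
  replace hK : K = firstOrderCone S d := hK
  subst hK
  constructor
  · intro h
    obtain ⟨t, ht, h_nonneg⟩ := exists_mem_stdSimplex_forall_sum_mul_nonneg
      (convex_image_firstOrderCone_of_mem_pencil S d A _ _ hgen)
      ⟨_, 0, ⟨0, S.zero_mem, 0, le_rfl, by simp⟩, rfl⟩
      (by rintro _ ⟨x, hx, rfl⟩; exact h x hx)
    exact ⟨t, ht.1, ht.2, fun x hx => h_nonneg _ ⟨x, hx, rfl⟩⟩
  · rintro ⟨t, ht₀, ht₁, h⟩ x hx
    exact exists_nonneg_of_sum_mul_nonneg ⟨ht₀, ht₁⟩ (h x hx)
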